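/- Let d ≥ 1, q > 4, and p ≥ (q/3)' (the Hölder conjugate of q/3). Then there is c = c(d,p,q) > 0 such that for every integer N ≥ 2, every 0 < ε₀ < 1, every ℓ ∈ (0,∞)^d with l₁ ≤ ⋯ ≤ l_d, and every g elliptic over Q^ℓ with parameters (N, ε₀): ‖E^ℓ_g‖^{RWT}_{L^p→L^q} ≥ c·(l₁⋯l_{d−1})^{1/p' − 1/q}·l_d^{1 − 3/q − 1/p}. -/

import Mathlib

open MeasureTheory ENNReal Filter
open scoped RealInnerProductSpace
noncomputable section

/-- `d`-dimensional Euclidean space. -/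
abbrev Euc (d : ℕ) : Type := EuclideanSpace ℝ (Fin d)

/-- The `i`-th standard basis vector of `Euc d`. -/
def stdb (d : ℕ) (i : Fin d) : Euc d := EuclideanSpace.single i 1

/-- The open box `Q^ℓ = ∏_i (-ℓ i, ℓ i)`, with sidelengths in `(0,∞]` encoded in `ℝ≥0∞`. -/
def Qset (d : ℕ) (ℓ : Fin d → ℝ≥0∞) : Set (Euc d) :=
  {ξ | ∀ i, ENNReal.ofReal |ξ i| < ℓ i}

/-- The Hölder conjugate exponent `p' = p/(p-1)`, computed in `ℝ≥0∞`. -/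
def hconj (p : ℝ≥0∞) : ℝ≥0∞ := (1 - 1 / p)⁻¹

/-- The perturbation `h = g - |·|²`. -/
def pert (d : ℕ) (g : Euc d → ℝ) : Euc d → ℝ := fun ξ => g ξ - ‖ξ‖ ^ 2

/-- The coordinatewise scaling map `A^c (x) = (c 1 * x 1, …, c d * x d)`. -/
def scaleMap (d : ℕ) (c : Fin d → ℝ) (x : Euc d) : Euc d := WithLp.toLp 2 (fun i => c i * x i)

/-- The second-order partial derivative `∂_i ∂_j f (ξ)`, an entry of the Hessian `D²f(ξ)`. -/
def d2 (d : ℕ) (f : Euc d → ℝ) (ξ : Euc d) (i j : Fin d) : ℝ :=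
  iteratedFDeriv ℝ 2 f ξ ![stdb d i, stdb d j]

/-- `g` is elliptic over the box `Q^ℓ` with parameters `(N, ε₀)`:  `g` is `C^{N+2}` on `Q^ℓ`
with positive definite Hessian, `g = |·|² + h` with `h` vanishing to second order at `0`, and
for every finite box `Q^c ⊆ Q^ℓ` all partial derivatives of order `≤ N` of all entries of
`(D²h) ∘ A^c` are `< ε₀` in absolute value on `Q^𝟙`. -/
structure IsElliptic (d : ℕ) (ℓ : Fin d → ℝ≥0∞) (g : Euc d → ℝ) (N : ℕ) (ε₀ : ℝ) : Prop where
  smooth : ContDiffOn ℝ (N + 2) g (Qset d ℓ)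
  posdef : ∀ ξ ∈ Qset d ℓ, ∀ v : Euc d, v ≠ 0 → 0 < iteratedFDeriv ℝ 2 g ξ ![v, v]
  zero : pert d g 0 = 0
  grad_zero : fderiv ℝ (pert d g) 0 = 0
  hess_zero : ∀ i j, d2 d (pert d g) 0 i j = 0
  bound : ∀ c : Fin d → ℝ, (∀ i, 0 < c i) →
    Qset d (fun i => ENNReal.ofReal (c i)) ⊆ Qset d ℓ →
    ∀ m : ℕ, m ≤ N → ∀ i j : Fin d, ∀ v : Fin m → Fin d,
      ∀ ξ ∈ Qset d (fun _ => 1),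
        |iteratedFDeriv ℝ m (fun x => d2 d (pert d g) (scaleMap d c x) i j) ξ
          (fun r => stdb d (v r))| < ε₀

/-- The extension operator `E^ℓ_g f (t,x) = ∫_{Q^ℓ} e^{i(t g(ξ) + x·ξ)} f(ξ) dξ`. -/
def extOp (d : ℕ) (ℓ : Fin d → ℝ≥0∞) (g : Euc d → ℝ) (f : Euc d → ℂ)
    (tx : ℝ × Euc d) : ℂ :=
  ∫ ξ in Qset d ℓ, Complex.exp (Complex.I * ((tx.1 * g ξ + inner ℝ ξ tx.2 : ℝ) : ℂ)) * f ξ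

/-- The `L^p(Q^ℓ) → L^q(ℝ^{1+d})` operator norm of `E^ℓ_g`. -/
def extOpNorm (d : ℕ) (ℓ : Fin d → ℝ≥0∞) (g : Euc d → ℝ) (p q : ℝ≥0∞) : ℝ≥0∞ :=
  sInf {C : ℝ≥0∞ | ∀ f : Euc d → ℂ, MemLp f p (volume.restrict (Qset d ℓ)) →
    eLpNorm (extOp d ℓ g f) q volume ≤ C * eLpNorm f p (volume.restrict (Qset d ℓ))}

/-- The pairing `⟨u, v⟩ = ∫ u conj(v)` on `ℝ^{1+d}`. -/
def pairing (d : ℕ) (u v : ℝ × Euc d → ℂ) : ℂ := ∫ y, u y * (starRingEnd ℂ) (v y)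

/-- The restricted weak type `(p,q)` "norm" of an operator `T` acting on functions
supported in `S`. -/
def rwtNormOp (d : ℕ) (S : Set (Euc d)) (T : (Euc d → ℂ) → (ℝ × Euc d) → ℂ)
    (p q : ℝ≥0∞) : ℝ≥0∞ :=
  ⨆ (E : Set (Euc d)) (F : Set (ℝ × Euc d)) (fE : Euc d → ℂ) (gF : ℝ × Euc d → ℂ)
    (_ : MeasurableSet E) (_ : E ⊆ S) (_ : 0 < volume E) (_ : volume E < ⊤)
    (_ : MeasurableSet F) (_ : 0 < volume F) (_ : volume F < ⊤)
    (_ : Measurable fE) (_ : ∀ x, ‖fE x‖ ≤ E.indicator (fun _ => (1 : ℝ)) x)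
    (_ : Measurable gF) (_ : ∀ y, ‖gF y‖ ≤ F.indicator (fun _ => (1 : ℝ)) y),
    ENNReal.ofReal ‖pairing d (T fE) gF‖ /
      (volume E ^ (1 / p).toReal * volume F ^ (1 - (1 / q).toReal))

/-- The restricted weak type norm `‖E^ℓ_g‖^{RWT}_{L^p → L^q}`. -/
def rwtNorm (d : ℕ) (ℓ : Fin d → ℝ≥0∞) (g : Euc d → ℝ) (p q : ℝ≥0∞) : ℝ≥0∞ :=
  rwtNormOp d (Qset d ℓ) (extOp d ℓ g) p q

/-- The product `l₁ ⋯ l_j` of the first `j` sidelengths. -/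
def sidep (d : ℕ) (ℓ : Fin d → ℝ≥0∞) (j : ℕ) : ℝ≥0∞ :=
  ∏ i ∈ Finset.univ.filter (fun i : Fin d => (i : ℕ) < j), ℓ i

/-!
Knapp example. Near the origin `g` is `|ξ|²` up to a perturbation whose Hessian is small, so
Taylor's formula gives `|g| ≤ M := C_d l_d²` on `E := Q^ℓ`. On the dual box
`F := (-1/(2M), 1/(2M)) × ∏ (-1/(2 d l_i), 1/(2 d l_i))` the phase `t g(ξ) + x·ξ` then stays in
`[-1, 1]`, so `Re E^ℓ_g χ_E ≥ |E|/2` on `F` and `|⟨E^ℓ_g χ_E, χ_F⟩| ≥ |E| |F| / 2`. Testing the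
restricted weak type bound on `(E, F)` gives `|E|^{1/p'} |F|^{1/q} / 2`, and
`|E| ≈ l₁ ⋯ l_d`, `|F| ≈ (l₁ ⋯ l_{d-1} l_d³)⁻¹` turn this into the stated power of the sidelengths.
-/

lemma Real.half_le_cos_of_abs_le_one {x : ℝ} (hx : |x| ≤ 1) : 1 / 2 ≤ Real.cos x := by
  have : x ^ 2 ≤ 1 := by nlinarith [sq_abs x, abs_nonneg x]
  linarith [Real.one_sub_sq_div_two_le_cos (x := x)]

lemma Real.half_mul_div_rpow_eq {x y a b : ℝ} (hx : 0 < x) (hy : 0 < y) :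
    1 / 2 * x * y / (x ^ a * y ^ (1 - b)) = 1 / 2 * x ^ (1 - a) * y ^ b := by
  rw [Real.rpow_sub hx, Real.rpow_sub hy, Real.rpow_one, Real.rpow_one]
  field_simp

/-- The Knapp ratio `|E|^{1-1/p} |F|^{1/q}` for `|E| = W u L` and `|F| = K / (u L³)`. -/
lemma knapp_rpow_identity {W K u L a b : ℝ} (hW : 0 < W) (hK : 0 < K) (hu : 0 < u)
    (hL : 0 < L) :
    W ^ (1 - a) * K ^ b * u ^ (1 - a - b) * L ^ (1 - 3 * b - a) =
      (W * (u * L)) ^ (1 - a) * (K * (u * L ^ 3)⁻¹) ^ b := by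
  rw [Real.mul_rpow hW.le (by positivity), Real.mul_rpow hu.le hL.le,
    Real.mul_rpow hK.le (by positivity), Real.inv_rpow (by positivity),
    Real.mul_rpow hu.le (by positivity), ← Real.rpow_natCast L 3, ← Real.rpow_mul hL.le,
    show 1 - a - b = (1 - a) - b by ring,
    show 1 - 3 * b - a = (1 - a) - (3 : ℕ) * b by push_cast; ring,
    Real.rpow_sub hu, Real.rpow_sub hL]
  field_simp

lemma Fin.prod_eq_prod_filter_lt_mul_last {M : Type*} [CommMonoid M] {d : ℕ} (hd : 1 ≤ d)
    (f : Fin d → M) :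
    ∏ i, f i = (∏ i ∈ Finset.univ.filter (fun i : Fin d => (i : ℕ) < d - 1), f i) *
      f ⟨d - 1, Nat.sub_lt hd Nat.one_pos⟩ := by
  rw [← Finset.prod_filter_mul_prod_filter_not Finset.univ (fun i : Fin d => (i : ℕ) < d - 1)]
  congr 1
  convert Finset.prod_singleton f (⟨d - 1, Nat.sub_lt hd Nat.one_pos⟩ : Fin d)
  ext i
  simp only [Finset.mem_filter, Finset.mem_univ, true_and, Finset.mem_singleton, Fin.ext_iff,
    not_lt]
  omega

lemma norm_le_of_norm_fderiv_fderiv_le {E F : Type*} [NormedAddCommGroup E] [NormedSpace ℝ E]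
    [NormedAddCommGroup F] [NormedSpace ℝ F] {f : E → F} {s : Set E} {M R : ℝ}
    (hs : Convex ℝ s) (h0 : (0 : E) ∈ s) (hf : ∀ x ∈ s, ContDiffAt ℝ 2 f x)
    (hf0 : f 0 = 0) (hdf0 : fderiv ℝ f 0 = 0)
    (hM : ∀ x ∈ s, ‖fderiv ℝ (fderiv ℝ f) x‖ ≤ M) (hR : ∀ x ∈ s, ‖x‖ ≤ R)
    {x : E} (hx : x ∈ s) : ‖f x‖ ≤ M * R ^ 2 := by
  have hM0 : 0 ≤ M := (norm_nonneg (fderiv ℝ (fderiv ℝ f) 0)).trans (hM 0 h0)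
  have hdf : ∀ y ∈ s, ‖fderiv ℝ f y‖ ≤ M * R := fun y hy => by
    have := hs.norm_image_sub_le_of_norm_fderiv_le
      (fun z hz => ((hf z hz).fderiv_right (m := 1) le_rfl).differentiableAt one_ne_zero)
      hM h0 hy
    rw [hdf0, sub_zero, sub_zero] at this
    exact this.trans (mul_le_mul_of_nonneg_left (hR y hy) hM0)
  have := hs.norm_image_sub_le_of_norm_fderiv_le
    (fun z hz => (hf z hz).differentiableAt two_ne_zero) hdf h0 hx
  rw [hf0, sub_zero, sub_zero] at this
  calc ‖f x‖ ≤ M * R * ‖x‖ := this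
    _ ≤ M * R * R :=
        mul_le_mul_of_nonneg_left (hR x hx) (mul_nonneg hM0 ((norm_nonneg _).trans (hR x hx)))
    _ = M * R ^ 2 := by ring

lemma EuclideanSpace.sum_abs_apply_le {ι : Type*} [Fintype ι] (u : EuclideanSpace ℝ ι) :
    ∑ i, |u i| ≤ Fintype.card ι * ‖u‖ := by
  simpa using Finset.sum_le_sum fun i (_ : i ∈ Finset.univ) => PiLp.norm_apply_le u i

lemma EuclideanSpace.bilin_apply_eq_sum {ι : Type*} [Fintype ι] [DecidableEq ι]
    (B : EuclideanSpace ℝ ι →L[ℝ] EuclideanSpace ℝ ι →L[ℝ] ℝ) (u v : EuclideanSpace ℝ ι) :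
    B u v = ∑ i, ∑ j, u i * v j * B (EuclideanSpace.single i 1) (EuclideanSpace.single j 1) := by
  conv_lhs => rw [← (EuclideanSpace.basisFun ι ℝ).sum_repr u,
    ← (EuclideanSpace.basisFun ι ℝ).sum_repr v]
  simp only [EuclideanSpace.basisFun_repr, EuclideanSpace.basisFun_apply, map_sum, map_smul,
    FunLike.coe_sum, Finset.sum_apply, FunLike.coe_smul, Pi.smul_apply, smul_eq_mul]
  rw [Finset.sum_comm]
  simp only [Finset.mul_sum]
  refine Finset.sum_congr rfl fun i _ => Finset.sum_congr rfl fun j _ => by ring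

lemma EuclideanSpace.norm_bilin_le_of_abs_apply_single_le {ι : Type*} [Fintype ι] [DecidableEq ι]
    (B : EuclideanSpace ℝ ι →L[ℝ] EuclideanSpace ℝ ι →L[ℝ] ℝ) {K : ℝ} (hK : 0 ≤ K)
    (h : ∀ i j, |B (EuclideanSpace.single i 1) (EuclideanSpace.single j 1)| ≤ K) :
    ‖B‖ ≤ Fintype.card ι ^ 2 * K := by
  refine B.opNorm_le_bound (by positivity) fun u => ?_
  refine ContinuousLinearMap.opNorm_le_bound _ (by positivity) fun v => ?_
  rw [Real.norm_eq_abs, EuclideanSpace.bilin_apply_eq_sum]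
  calc _ ≤ ∑ i, ∑ j, |u i| * |v j| * K := by
        refine (Finset.abs_sum_le_sum_abs _ _).trans (Finset.sum_le_sum fun i _ => ?_)
        refine (Finset.abs_sum_le_sum_abs _ _).trans (Finset.sum_le_sum fun j _ => ?_)
        rw [abs_mul, abs_mul]
        exact mul_le_mul_of_nonneg_left (h i j) (by positivity)
    _ = (∑ i, |u i|) * (∑ j, |v j|) * K := by
        rw [Finset.sum_mul_sum]; simp only [Finset.sum_mul]
    _ ≤ (Fintype.card ι * ‖u‖) * (Fintype.card ι * ‖v‖) * K := by
        gcongr <;> exact EuclideanSpace.sum_abs_apply_le _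
    _ = Fintype.card ι ^ 2 * K * ‖u‖ * ‖v‖ := by ring

lemma mul_measureReal_le_re_setIntegral {α : Type*} [MeasurableSpace α] {μ : Measure α}
    {s : Set α} {f : α → ℂ} {c : ℝ} (hs : MeasurableSet s) (hμs : μ s ≠ ⊤)
    (hf : IntegrableOn f s μ) (hc : ∀ x ∈ s, c ≤ (f x).re) :
    c * μ.real s ≤ (∫ x in s, f x ∂μ).re :=
  calc c * μ.real s ≤ ∫ x in s, (f x).re ∂μ :=
        (mul_comm _ _).trans_le (setIntegral_ge_of_const_le hs hμs hc hf.re)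
    _ = (∫ x in s, f x ∂μ).re := integral_re hf

lemma norm_indicator_one_le {X : Type*} (A : Set X) (x : X) :
    ‖A.indicator (1 : X → ℂ) x‖ ≤ A.indicator (fun _ => (1 : ℝ)) x := by
  rw [norm_indicator_eq_indicator_norm]
  simp

def openBox (d : ℕ) (r : Fin d → ℝ) : Set (Euc d) := {ξ | ∀ i, |ξ i| < r i}

lemma openBox_eq_preimage (d : ℕ) (r : Fin d → ℝ) :
    openBox d r = (MeasurableEquiv.toLp 2 (Fin d → ℝ)).symm ⁻¹'
      Set.univ.pi fun i => Set.Ioo (-r i) (r i) := by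
  ext ξ
  simp [openBox, abs_lt, MeasurableEquiv.coe_toLp_symm]

lemma isOpen_openBox (d : ℕ) (r : Fin d → ℝ) : IsOpen (openBox d r) := by
  simp only [openBox, Set.ofPred_forall]
  exact isOpen_iInter_of_finite fun i => isOpen_lt (by fun_prop) continuous_const

lemma convex_openBox (d : ℕ) (r : Fin d → ℝ) : Convex ℝ (openBox d r) := by
  rw [openBox_eq_preimage]
  exact (convex_pi fun i _ => convex_Ioo _ _).linear_preimage (WithLp.linearEquiv 2 ℝ _).toLinearMap

lemma volume_openBox (d : ℕ) (r : Fin d → ℝ) :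
    volume (openBox d r) = ∏ i, ENNReal.ofReal (2 * r i) := by
  rw [openBox_eq_preimage, (EuclideanSpace.volume_preserving_symm_measurableEquiv_toLp
    (Fin d)).measure_preimage (MeasurableSet.univ_pi fun _ => measurableSet_Ioo).nullMeasurableSet,
    volume_pi_pi]
  simp only [Real.volume_Ioo, sub_neg_eq_add, two_mul]

lemma measureReal_openBox {d : ℕ} {r : Fin d → ℝ} (hr : ∀ i, 0 ≤ r i) :
    volume.real (openBox d r) = ∏ i, 2 * r i := by
  rw [measureReal_def, volume_openBox, ENNReal.toReal_prod]
  exact Finset.prod_congr rfl fun i _ => ENNReal.toReal_ofReal (by linarith [hr i])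

lemma norm_sq_le_of_mem_openBox {d : ℕ} {r : Fin d → ℝ} {L : ℝ} (hrL : ∀ i, r i ≤ L)
    {ξ : Euc d} (hξ : ξ ∈ openBox d r) : ‖ξ‖ ^ 2 ≤ d * L ^ 2 := by
  rw [EuclideanSpace.real_norm_sq_eq]
  simpa using Finset.sum_le_sum fun i (_ : i ∈ Finset.univ) =>
    (sq_abs (ξ i)).symm.trans_le (pow_le_pow_left₀ (abs_nonneg _) ((hξ i).le.trans (hrL i)) 2)

lemma isOpen_Qset (d : ℕ) (ℓ : Fin d → ℝ≥0∞) : IsOpen (Qset d ℓ) := by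
  simp only [Qset, Set.ofPred_forall]
  exact isOpen_iInter_of_finite fun i =>
    isOpen_lt (ENNReal.continuous_ofReal.comp (by fun_prop)) continuous_const

lemma Qset_eq_openBox {d : ℕ} {ℓ : Fin d → ℝ≥0∞} (hℓ : ∀ i, ℓ i ≠ ⊤) :
    Qset d ℓ = openBox d fun i => (ℓ i).toReal := by
  ext ξ
  exact forall_congr' fun i => ENNReal.ofReal_lt_iff_lt_toReal (abs_nonneg _) (hℓ i)

def dualBox (d : ℕ) (M : ℝ) (r : Fin d → ℝ) : Set (ℝ × Euc d) :=
  Set.Ioo (-(2 * M)⁻¹) (2 * M)⁻¹ ×ˢ openBox d fun i => (2 * d * r i)⁻¹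

lemma measurableSet_dualBox (d : ℕ) (M : ℝ) (r : Fin d → ℝ) : MeasurableSet (dualBox d M r) :=
  measurableSet_Ioo.prod (isOpen_openBox d _).measurableSet

lemma measureReal_dualBox {d : ℕ} {M : ℝ} {r : Fin d → ℝ} (hM : 0 < M) (hr : ∀ i, 0 < r i) :
    volume.real (dualBox d M r) = M⁻¹ * ∏ i, (d * r i)⁻¹ := by
  rw [dualBox, measureReal_def, Measure.volume_eq_prod, Measure.prod_prod, ENNReal.toReal_mul,
    ← measureReal_def, ← measureReal_def, Real.volume_real_Ioo_of_le (by simp [hM.le]),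
    measureReal_openBox fun i => inv_nonneg.mpr (by have := hr i; positivity)]
  congr 1
  · ring
  · exact Finset.prod_congr rfl fun i _ => by ring

lemma abs_phase_le_one {d : ℕ} {M G t : ℝ} {r : Fin d → ℝ} {ξ x : Euc d} (hM : 0 < M)
    (hr : ∀ i, 0 < r i) (hξ : ξ ∈ openBox d r) (hG : |G| ≤ M) (htx : (t, x) ∈ dualBox d M r) :
    |t * G + ⟪ξ, x⟫| ≤ 1 := by
  obtain ⟨ht, hx⟩ := htx
  have htG : |t * G| ≤ 1 / 2 := by
    rw [abs_mul]
    calc |t| * |G| ≤ (2 * M)⁻¹ * M :=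
          mul_le_mul (abs_le.mpr ⟨ht.1.le, ht.2.le⟩) hG (abs_nonneg _) (by positivity)
      _ = 1 / 2 := by field_simp
  have hξx : |⟪ξ, x⟫| ≤ 1 / 2 := by
    have hterm : ∀ i, |ξ i * x i| ≤ (2 * (d : ℝ))⁻¹ := fun i => by
      have := hr i
      calc |ξ i * x i| ≤ r i * (2 * d * r i)⁻¹ := by
            rw [abs_mul]; exact mul_le_mul (hξ i).le (hx i).le (abs_nonneg _) this.le
        _ = (2 * (d : ℝ))⁻¹ := by field_simp
    calc |⟪ξ, x⟫| = |∑ i, ξ i * x i| := by simp [PiLp.inner_apply, mul_comm]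
      _ ≤ ∑ i, |ξ i * x i| := Finset.abs_sum_le_sum_abs _ _
      _ ≤ ∑ _i : Fin d, (2 * d : ℝ)⁻¹ := Finset.sum_le_sum fun i _ => hterm i
      _ ≤ 1 / 2 := by
        rw [Finset.sum_const, Finset.card_univ, Fintype.card_fin, nsmul_eq_mul, mul_inv,
          mul_left_comm, one_div]
        exact mul_le_of_le_one_right (by norm_num) mul_inv_le_one
  calc |t * G + ⟪ξ, x⟫| ≤ |t * G| + |⟪ξ, x⟫| := abs_add_le _ _
    _ ≤ 1 := by linarith

lemma one_le_hconj (p : ℝ≥0∞) : 1 ≤ hconj p :=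
  ENNReal.one_le_inv.mpr tsub_le_self

/-- For `p < 1` the subtraction `1 - 1/p` truncates to `0` and `hconj p = ⊤`. -/
lemma toReal_one_div_hconj {p : ℝ≥0∞} (hp : 1 ≤ p) :
    (1 / hconj p).toReal = 1 - (1 / p).toReal := by
  have hp' : 1 / p ≤ 1 := by simpa [one_div] using ENNReal.inv_le_one.mpr hp
  rw [hconj, one_div (1 - _)⁻¹, inv_inv, ENNReal.toReal_sub_of_le hp' ENNReal.one_ne_top,
    ENNReal.toReal_one]

lemma sidep_eq_ofReal {d : ℕ} {ℓ : Fin d → ℝ≥0∞} (hℓ : ∀ i, ℓ i ≠ ⊤) (j : ℕ) :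
    sidep d ℓ j =
      ENNReal.ofReal (∏ i ∈ Finset.univ.filter (fun i : Fin d => (i : ℕ) < j), (ℓ i).toReal) := by
  rw [sidep, ENNReal.ofReal_prod_of_nonneg fun i _ => ENNReal.toReal_nonneg]
  exact Finset.prod_congr rfl fun i _ => (ENNReal.ofReal_toReal (hℓ i)).symm

def extKernel (d : ℕ) (g : Euc d → ℝ) (y : ℝ × Euc d) (ξ : Euc d) : ℂ :=
  Complex.exp (Complex.I * ((y.1 * g ξ + ⟪ξ, y.2⟫ : ℝ) : ℂ))

section extKernel

variable {d : ℕ} {g : Euc d → ℝ}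

lemma norm_extKernel (y : ℝ × Euc d) (ξ : Euc d) : ‖extKernel d g y ξ‖ = 1 := by
  rw [extKernel, mul_comm, Complex.norm_exp_ofReal_mul_I]

lemma re_extKernel (y : ℝ × Euc d) (ξ : Euc d) :
    (extKernel d g y ξ).re = Real.cos (y.1 * g ξ + ⟪ξ, y.2⟫) := by
  rw [extKernel, mul_comm, Complex.exp_ofReal_mul_I_re]

lemma integrableOn_extKernel {S : Set (Euc d)} (hS : MeasurableSet S) (hS_top : volume S ≠ ⊤)
    (hg : ContinuousOn g S) (y : ℝ × Euc d) : IntegrableOn (extKernel d g y) S :=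
  (integrableOn_const hS_top).mono'
    ((ContinuousOn.cexp (by fun_prop)).aestronglyMeasurable hS)
    (.of_forall fun ξ => (norm_extKernel y ξ).le)

lemma extOp_indicator_one (ℓ : Fin d → ℝ≥0∞) (y : ℝ × Euc d) :
    extOp d ℓ g ((Qset d ℓ).indicator 1) y = ∫ ξ in Qset d ℓ, extKernel d g y ξ :=
  setIntegral_congr_fun (isOpen_Qset d ℓ).measurableSet fun ξ hξ => by
    simp [extKernel, Set.indicator_of_mem hξ]

lemma continuous_extOp_indicator_one {ℓ : Fin d → ℝ≥0∞} (hQ : volume (Qset d ℓ) ≠ ⊤)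
    (hg : ContinuousOn g (Qset d ℓ)) : Continuous (extOp d ℓ g ((Qset d ℓ).indicator 1)) := by
  simp only [funext (extOp_indicator_one ℓ)]
  exact continuous_of_dominated
    (fun y => (integrableOn_extKernel (isOpen_Qset d ℓ).measurableSet hQ hg y).1)
    (fun y => .of_forall fun ξ => (norm_extKernel y ξ).le) (integrableOn_const hQ)
    (.of_forall fun ξ => by unfold extKernel; fun_prop)

end extKernel

lemma pairing_indicator_one {d : ℕ} (u : ℝ × Euc d → ℂ) {F : Set (ℝ × Euc d)}
    (hF : MeasurableSet F) : pairing d u (F.indicator 1) = ∫ y in F, u y := by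
  rw [pairing, ← integral_indicator hF]
  congr with y
  by_cases hy : y ∈ F <;> simp [hy]

lemma le_rwtNormOp {d : ℕ} {S E : Set (Euc d)} {F : Set (ℝ × Euc d)}
    (T : (Euc d → ℂ) → (ℝ × Euc d) → ℂ) (p q : ℝ≥0∞) (hE : MeasurableSet E) (hES : E ⊆ S)
    (hE0 : 0 < volume E) (hE_top : volume E < ⊤) (hF : MeasurableSet F) (hF0 : 0 < volume F)
    (hF_top : volume F < ⊤) :
    ENNReal.ofReal ‖pairing d (T (E.indicator 1)) (F.indicator 1)‖ /
        (volume E ^ (1 / p).toReal * volume F ^ (1 - (1 / q).toReal)) ≤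
      rwtNormOp d S T p q :=
  le_iSup_of_le E <| le_iSup_of_le F <| le_iSup_of_le _ <| le_iSup_of_le _ <|
    le_iSup_of_le hE <| le_iSup_of_le hES <| le_iSup_of_le hE0 <| le_iSup_of_le hE_top <|
    le_iSup_of_le hF <| le_iSup_of_le hF0 <| le_iSup_of_le hF_top <|
    le_iSup_of_le (measurable_one.indicator hE) <| le_iSup_of_le (norm_indicator_one_le E) <|
    le_iSup_of_le (measurable_one.indicator hF) <| le_iSup_of_le (norm_indicator_one_le F) le_rfl

lemma half_mul_le_norm_pairing_extOp {d : ℕ} {ℓ : Fin d → ℝ≥0∞} {g : Euc d → ℝ}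
    {F : Set (ℝ × Euc d)} (hQ : volume (Qset d ℓ) ≠ ⊤) (hg : ContinuousOn g (Qset d ℓ))
    (hF : MeasurableSet F) (hF_top : volume F ≠ ⊤)
    (hphase : ∀ y ∈ F, ∀ ξ ∈ Qset d ℓ, |y.1 * g ξ + ⟪ξ, y.2⟫| ≤ 1) :
    1 / 2 * volume.real (Qset d ℓ) * volume.real F ≤
      ‖pairing d (extOp d ℓ g ((Qset d ℓ).indicator 1)) (F.indicator 1)‖ := by
  have hQm := (isOpen_Qset d ℓ).measurableSet
  have hre : ∀ y ∈ F, 1 / 2 * volume.real (Qset d ℓ) ≤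
      (extOp d ℓ g ((Qset d ℓ).indicator 1) y).re := fun y hy => by
    rw [extOp_indicator_one]
    refine mul_measureReal_le_re_setIntegral hQm hQ (integrableOn_extKernel hQm hQ hg y)
      fun ξ hξ => ?_
    rw [re_extKernel]
    exact Real.half_le_cos_of_abs_le_one (hphase y hy ξ hξ)
  have hint : IntegrableOn (extOp d ℓ g ((Qset d ℓ).indicator 1)) F :=
    (integrableOn_const (C := volume.real (Qset d ℓ)) hF_top).mono'
      (continuous_extOp_indicator_one hQ hg).aestronglyMeasurable
      (.of_forall fun y => by
        rw [extOp_indicator_one]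
        simpa using norm_setIntegral_le_of_norm_le_const hQ.lt_top
          fun ξ _ => (norm_extKernel (g := g) y ξ).le)
  rw [pairing_indicator_one _ hF]
  exact (mul_measureReal_le_re_setIntegral hF hF_top hint hre).trans (Complex.re_le_norm _)

lemma half_mul_rpow_le_rwtNorm_of_abs_phase_le_one {d : ℕ} {ℓ : Fin d → ℝ≥0∞} {g : Euc d → ℝ}
    {F : Set (ℝ × Euc d)} (p q : ℝ≥0∞) (hQ : 0 < volume.real (Qset d ℓ))
    (hg : ContinuousOn g (Qset d ℓ)) (hF : MeasurableSet F) (hF0 : 0 < volume.real F)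
    (hphase : ∀ y ∈ F, ∀ ξ ∈ Qset d ℓ, |y.1 * g ξ + ⟪ξ, y.2⟫| ≤ 1) :
    ENNReal.ofReal (1 / 2 * volume.real (Qset d ℓ) ^ (1 - (1 / p).toReal) *
      volume.real F ^ (1 / q).toReal) ≤ rwtNorm d ℓ g p q := by
  obtain ⟨hQ0, hQ_top⟩ := ENNReal.toReal_pos_iff.mp hQ
  obtain ⟨hF0', hF_top⟩ := ENNReal.toReal_pos_iff.mp hF0
  calc _ = ENNReal.ofReal (1 / 2 * volume.real (Qset d ℓ) * volume.real F) /
        ENNReal.ofReal (volume.real (Qset d ℓ) ^ (1 / p).toReal *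
          volume.real F ^ (1 - (1 / q).toReal)) := by
        rw [← ENNReal.ofReal_div_of_pos (by positivity), Real.half_mul_div_rpow_eq hQ hF0]
    _ ≤ ENNReal.ofReal ‖pairing d (extOp d ℓ g ((Qset d ℓ).indicator 1)) (F.indicator 1)‖ /
        (volume (Qset d ℓ) ^ (1 / p).toReal * volume F ^ (1 - (1 / q).toReal)) := by
        rw [← ofReal_measureReal hQ_top.ne, ← ofReal_measureReal hF_top.ne,
          ENNReal.ofReal_rpow_of_pos hQ, ENNReal.ofReal_rpow_of_pos hF0,
          ← ENNReal.ofReal_mul (by positivity)]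
        gcongr
        exact half_mul_le_norm_pairing_extOp hQ_top.ne hg hF hF_top.ne hphase
    _ ≤ rwtNorm d ℓ g p q :=
        le_rwtNormOp _ p q (isOpen_Qset d ℓ).measurableSet subset_rfl hQ0 hQ_top hF hF0' hF_top

namespace IsElliptic

variable {d N : ℕ} {ε₀ : ℝ} {ℓ : Fin d → ℝ≥0∞} {g : Euc d → ℝ}

lemma abs_d2_pert_lt (hg : IsElliptic d ℓ g N ε₀) (hℓ : ∀ i, ℓ i ≠ ⊤) {η : Euc d}
    (hη : η ∈ Qset d ℓ) (i j : Fin d) : |d2 d (pert d g) η i j| < ε₀ := by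
  set r : Fin d → ℝ := fun i => (ℓ i).toReal
  have hηr : ∀ k, |η k| < r k := by rwa [Qset_eq_openBox hℓ] at hη
  have hr : ∀ k, 0 < r k := fun k => (abs_nonneg _).trans_lt (hηr k)
  have hsub : Qset d (fun k => ENNReal.ofReal (r k)) ⊆ Qset d ℓ := by
    simp only [r, ENNReal.ofReal_toReal (hℓ _), subset_refl]
  let ξ : Euc d := WithLp.toLp 2 fun k => η k / r k
  have hξ : ξ ∈ Qset d (fun _ => 1) := fun k => by
    rw [← ENNReal.ofReal_one, ENNReal.ofReal_lt_ofReal_iff one_pos]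
    simpa [ξ, abs_div, abs_of_pos (hr k), div_lt_one (hr k)] using hηr k
  have hscale : scaleMap d r ξ = η := by
    ext k
    simp [scaleMap, ξ, mul_div_cancel₀ _ (hr k).ne']
  simpa [hscale] using hg.bound r hr hsub 0 N.zero_le i j Fin.elim0 ξ hξ

lemma contDiffAt_pert (hg : IsElliptic d ℓ g N ε₀) {x : Euc d} (hx : x ∈ Qset d ℓ) :
    ContDiffAt ℝ 2 (pert d g) x :=
  ((hg.smooth.contDiffAt ((isOpen_Qset d ℓ).mem_nhds hx)).of_le
    (by exact_mod_cast le_add_self)).sub (contDiff_norm_sq ℝ).contDiffAt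

lemma norm_fderiv_fderiv_pert_le (hg : IsElliptic d ℓ g N ε₀) (hℓ : ∀ i, ℓ i ≠ ⊤)
    (hε : ε₀ ≤ 1) {x : Euc d} (hx : x ∈ Qset d ℓ) :
    ‖fderiv ℝ (fderiv ℝ (pert d g)) x‖ ≤ d ^ 2 := by
  refine (EuclideanSpace.norm_bilin_le_of_abs_apply_single_le (ι := Fin d) _ zero_le_one
    fun i j => ?_).trans_eq (by simp)
  have := hg.abs_d2_pert_lt hℓ hx i j
  rw [d2, iteratedFDeriv_two_apply] at this
  exact (this.trans_le hε).le

lemma abs_le (hg : IsElliptic d ℓ g N ε₀) (hℓ : ∀ i, ℓ i ≠ ⊤) (hε : ε₀ ≤ 1) {L : ℝ}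
    (hL : ∀ i, (ℓ i).toReal ≤ L) {ξ : Euc d} (hξ : ξ ∈ Qset d ℓ) :
    |g ξ| ≤ (d ^ 2 + 1) * (d * L ^ 2) := by
  have hQ := Qset_eq_openBox hℓ
  have h0 : (0 : Euc d) ∈ Qset d ℓ := fun i => by simpa using zero_le.trans_lt (hξ i)
  have hR : ∀ x ∈ Qset d ℓ, ‖x‖ ≤ √(d * L ^ 2) := fun x hx =>
    Real.le_sqrt_of_sq_le (norm_sq_le_of_mem_openBox hL (hQ ▸ hx))
  have hpert := norm_le_of_norm_fderiv_fderiv_le (hQ ▸ convex_openBox d _) h0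
    (fun x hx => hg.contDiffAt_pert hx) hg.zero hg.grad_zero
    (fun x hx => hg.norm_fderiv_fderiv_pert_le hℓ hε hx) hR hξ
  rw [Real.sq_sqrt (by positivity)] at hpert
  have hsq : ‖ξ‖ ^ 2 ≤ d * L ^ 2 := norm_sq_le_of_mem_openBox hL (hQ ▸ hξ)
  have hg_eq : g ξ = pert d g ξ + ‖ξ‖ ^ 2 := by simp [pert]
  rw [hg_eq]
  calc |pert d g ξ + ‖ξ‖ ^ 2| ≤ |pert d g ξ| + |‖ξ‖ ^ 2| := abs_add_le _ _
    _ = ‖pert d g ξ‖ + ‖ξ‖ ^ 2 := by rw [Real.norm_eq_abs, abs_of_nonneg (sq_nonneg ‖ξ‖)]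
    _ ≤ (d ^ 2 + 1) * (d * L ^ 2) := by linarith

lemma half_mul_rpow_le_rwtNorm (hg : IsElliptic d ℓ g N ε₀) (hd : 1 ≤ d)
    (hℓ : ∀ i, 0 < ℓ i ∧ ℓ i < ⊤) (hε : ε₀ ≤ 1)
    {L : ℝ} (hL : ∀ i, (ℓ i).toReal ≤ L) (p q : ℝ≥0∞) :
    ENNReal.ofReal (1 / 2 * (∏ i, 2 * (ℓ i).toReal) ^ (1 - (1 / p).toReal) *
      (((d ^ 2 + 1) * (d * L ^ 2))⁻¹ * ∏ i, (d * (ℓ i).toReal)⁻¹) ^ (1 / q).toReal) ≤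
        rwtNorm d ℓ g p q := by
  have hℓ_top : ∀ i, ℓ i ≠ ⊤ := fun i => (hℓ i).2.ne
  have hr : ∀ i, 0 < (ℓ i).toReal := fun i => ENNReal.toReal_pos (hℓ i).1.ne' (hℓ_top i)
  have hQ := Qset_eq_openBox hℓ_top
  have hM : 0 < (d ^ 2 + 1) * (d * L ^ 2 : ℝ) := by
    have := (hr ⟨0, hd⟩).trans_le (hL _)
    positivity
  have hphase : ∀ y ∈ dualBox d ((d ^ 2 + 1) * (d * L ^ 2)) (fun i => (ℓ i).toReal),
      ∀ ξ ∈ Qset d ℓ, |y.1 * g ξ + ⟪ξ, y.2⟫| ≤ 1 := fun y hy ξ hξ =>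
    abs_phase_le_one hM hr (hQ ▸ hξ) (hg.abs_le hℓ_top hε hL hξ) hy
  have hvolQ : volume.real (Qset d ℓ) = ∏ i, 2 * (ℓ i).toReal :=
    hQ ▸ measureReal_openBox fun i => (hr i).le
  have hvolF := measureReal_dualBox hM hr
  have hQ0 : 0 < volume.real (Qset d ℓ) := hvolQ ▸ Finset.prod_pos fun i _ => by
    linarith [hr i]
  have hF0 : 0 < volume.real (dualBox d ((d ^ 2 + 1) * (d * L ^ 2)) fun i => (ℓ i).toReal) :=
    hvolF ▸ mul_pos (inv_pos.mpr hM) (Finset.prod_pos fun i _ => by have := hr i; positivity)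
  rw [← hvolQ, ← hvolF]
  exact half_mul_rpow_le_rwtNorm_of_abs_phase_le_one p q hQ0 hg.smooth.continuousOn
    (measurableSet_dualBox d _ _) hF0 hphase

end IsElliptic

/-- lower bound in the region `q > 4`, `p ≥ (q/3)'`. -/
theorem statement12 (d : ℕ) (hd : 1 ≤ d) (p q : ℝ≥0∞)
    (hp : hconj (q / 3) ≤ p) :
    ∃ c : ℝ≥0∞, 0 < c ∧
      ∀ N : ℕ, 2 ≤ N → ∀ ε₀ : ℝ, 0 < ε₀ → ε₀ < 1 →
        ∀ ℓ : Fin d → ℝ≥0∞, (∀ i, 0 < ℓ i ∧ ℓ i < ⊤) → Monotone ℓ →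
          ∀ g : Euc d → ℝ, IsElliptic d ℓ g N ε₀ →
            c * sidep d ℓ (d - 1) ^ ((1 / hconj p).toReal - (1 / q).toReal) *
                ℓ ⟨d - 1, by omega⟩ ^ (1 - 3 * (1 / q).toReal - (1 / p).toReal) ≤
              rwtNorm d ℓ g p q := by
  have hd0 : (0 : ℝ) < d := by exact_mod_cast hd
  set K : ℝ := ((d ^ 2 + 1) * d * d ^ d)⁻¹
  refine ⟨ENNReal.ofReal (1 / 2 * (2 ^ d) ^ (1 - (1 / p).toReal) * K ^ (1 / q).toReal),
    by positivity, fun N _ ε₀ _ hε ℓ hℓ hmono g hg => ?_⟩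
  have hℓ_top : ∀ i, ℓ i ≠ ⊤ := fun i => (hℓ i).2.ne
  have hr : ∀ i, 0 < (ℓ i).toReal := fun i => ENNReal.toReal_pos (hℓ i).1.ne' (hℓ_top i)
  set L := (ℓ ⟨d - 1, by omega⟩).toReal
  set u := ∏ i ∈ Finset.univ.filter (fun i : Fin d => (i : ℕ) < d - 1), (ℓ i).toReal
  have hu : 0 < u := Finset.prod_pos fun i _ => hr i
  have hL : 0 < L := hr _
  have hprod : ∏ i, (ℓ i).toReal = u * L := Fin.prod_eq_prod_filter_lt_mul_last hd _
  have key := hg.half_mul_rpow_le_rwtNorm hd hℓ hε.le (L := L)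
    (fun i => ENNReal.toReal_mono (hℓ_top _) (hmono (Nat.le_pred_of_lt i.isLt))) p q
  have hvolF : ((d ^ 2 + 1) * (d * L ^ 2))⁻¹ * ∏ i, (d * (ℓ i).toReal)⁻¹ = K * (u * L ^ 3)⁻¹ := by
    rw [Finset.prod_inv_distrib, Finset.prod_mul_distrib, hprod, Finset.prod_const,
      Finset.card_univ, Fintype.card_fin]
    simp only [K]
    field_simp
  rw [Finset.prod_mul_distrib, hprod, hvolF, Finset.prod_const, Finset.card_univ,
    Fintype.card_fin, mul_assoc, ← knapp_rpow_identity (by positivity) (by positivity) hu hL]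
    at key
  refine le_of_eq_of_le ?_ key
  rw [toReal_one_div_hconj ((one_le_hconj _).trans hp), sidep_eq_ofReal hℓ_top,
    ← ENNReal.ofReal_toReal (hℓ_top ⟨d - 1, _⟩), ENNReal.ofReal_rpow_of_pos hu,
    ENNReal.ofReal_rpow_of_pos hL, ← ENNReal.ofReal_mul (by positivity),
    ← ENNReal.ofReal_mul (by positivity)]
  congr 1
  ring
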